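/- With G, G' as in the diamond-reduction construction, if xy was a simple edge of G, then the third neighbours of x and y in G coincide in a vertex w, and in G' the vertices w, x, y form a trumpet whose parallel edge is between x and y. -/

import Mathlib

/-- A multigraph on vertex set `V`: a symmetric edge-multiplicity function with no loops. -/
structure Multigraph (V : Type*) where
  mult : V → V → ℕ
  symm : ∀ u v, mult u v = mult v u
  loopless : ∀ v, mult v v = 0

namespace Multigraph

variable {V : Type*}

/-- Adjacency: distinct vertices joined by at least one edge. -/
def Adj (G : Multigraph V) (u v : V) : Prop := u ≠ v ∧ 0 < G.mult u v

/-- The underlying simple graph. -/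
def toSimple (G : Multigraph V) : SimpleGraph V where
  Adj u v := u ≠ v ∧ 0 < G.mult u v
  symm := ⟨fun u v h => ⟨h.1.symm, by rw [G.symm v u]; exact h.2⟩⟩
  loopless := ⟨fun v h => h.1 rfl⟩

def Connected (G : Multigraph V) : Prop := G.toSimple.Connected

section Fin
variable [Fintype V] [DecidableEq V]

/-- The degree of a vertex, counting edge multiplicities. -/
def degree (G : Multigraph V) (v : V) : ℕ := ∑ u, G.mult v u

def IsCubic (G : Multigraph V) : Prop := ∀ v, G.degree v = 3

end Fin

variable [DecidableEq V]

/-- No induced claw `K_{1,3}` (centre `c`, leaves `a b d`). -/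
def IsClawFree (G : Multigraph V) : Prop :=
  ¬ ∃ c a b d : V, c ≠ a ∧ c ≠ b ∧ c ≠ d ∧ a ≠ b ∧ a ≠ d ∧ b ≠ d ∧
      G.mult c a = 1 ∧ G.mult c b = 1 ∧ G.mult c d = 1 ∧
      G.mult a b = 0 ∧ G.mult a d = 0 ∧ G.mult b d = 0

/-- An induced triangle (cycle of length three, all sides simple edges). -/
def IsTriangle (G : Multigraph V) (a b c : V) : Prop :=
  a ≠ b ∧ a ≠ c ∧ b ≠ c ∧ G.mult a b = 1 ∧ G.mult a c = 1 ∧ G.mult b c = 1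

/-- A trumpet: a triangle whose side `ab` is a multiple edge. -/
def IsTrumpet (G : Multigraph V) (a b c : V) : Prop :=
  a ≠ b ∧ a ≠ c ∧ b ≠ c ∧ G.mult a b = 2 ∧ G.mult a c = 1 ∧ G.mult b c = 1

/-- A digon: two vertices joined by parallel edges. -/
def IsDigon (G : Multigraph V) (u v : V) : Prop := u ≠ v ∧ 2 ≤ G.mult u v

/-- A diamond: an induced `K₄` minus the edge `ad`. -/
def IsDiamond (G : Multigraph V) (a b c d : V) : Prop :=
  a ≠ b ∧ a ≠ c ∧ a ≠ d ∧ b ≠ c ∧ b ≠ d ∧ c ≠ d ∧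
  G.mult a d = 0 ∧ G.mult a b = 1 ∧ G.mult a c = 1 ∧ G.mult b c = 1 ∧
  G.mult b d = 1 ∧ G.mult c d = 1

/-- The vertex sets of the diamonds of `G`. -/
def diamondSets (G : Multigraph V) : Set (Finset V) :=
  {s | ∃ a b c d, s = {a, b, c, d} ∧ G.IsDiamond a b c d}

/-- The number of diamonds of `G`. -/
noncomputable def diamondCount (G : Multigraph V) : ℕ := G.diamondSets.ncard

/-- The vertex sets of the digons of `G` that are not the multiple side of a trumpet. -/
def digonSets (G : Multigraph V) : Set (Finset V) :=
  {s | ∃ u v, s = {u, v} ∧ G.IsDigon u v ∧ ∀ w, ¬ G.IsTrumpet u v w}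

/-- The number of digons of `G` (not counting those inside trumpets). -/
noncomputable def digonCount (G : Multigraph V) : ℕ := G.digonSets.ncard

/-- `G` is (isomorphic to) the simple complete graph `K₄`. -/
def IsK4 (G : Multigraph V) : Prop :=
  Nonempty (G.toSimple ≃g (⊤ : SimpleGraph (Fin 4))) ∧ ∀ u v, G.mult u v ≤ 1

section Bisection
variable [Fintype V]

/-- A bisection: the two parts `B` and `Bᶜ` have the same size. -/
def IsBisection (G : Multigraph V) (B : Finset V) : Prop := B.card = Bᶜ.card

/-- The number of monochromatic edges inside the part `B` (with multiplicity). -/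
def monoEdges (G : Multigraph V) (B : Finset V) : ℕ :=
  (∑ u ∈ B, ∑ v ∈ B, G.mult u v) / 2

/-- The total number of monochromatic edges of the bisection `(B, Bᶜ)`. -/
def epsilon (G : Multigraph V) (B : Finset V) : ℕ := G.monoEdges B + G.monoEdges Bᶜ

/-- The simple graph induced by `G` on the part `B`. -/
def inducedSimple (G : Multigraph V) (B : Finset V) : SimpleGraph V where
  Adj u v := u ≠ v ∧ u ∈ B ∧ v ∈ B ∧ 0 < G.mult u v
  symm := ⟨fun u v h => ⟨h.1.symm, h.2.2.1, h.2.1, by rw [G.symm v u]; exact h.2.2.2⟩⟩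
  loopless := ⟨fun v h => h.1 rfl⟩

/-- Every monochromatic component inside `B` has at most `k` vertices. -/
def SmallComponents (G : Multigraph V) (B : Finset V) (k : ℕ) : Prop :=
  ∀ v ∈ B, {u | (G.inducedSimple B).Reachable v u}.ncard ≤ k

/-- A `k`-bisection. -/
def IsKBisection (G : Multigraph V) (B : Finset V) (k : ℕ) : Prop :=
  G.IsBisection B ∧ G.SmallComponents B k ∧ G.SmallComponents Bᶜ k

/-- A desired bisection: (DB1) exactly one monochromatic edge per triangle, (DB2) every
monochromatic edge lies in a triangle, (DB3) exactly one monochromatic edge per diamond,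
(DB4) no multiple edge is monochromatic. -/
def IsDesired (G : Multigraph V) (B : Finset V) : Prop :=
  G.IsBisection B ∧
  (∀ a b c, G.IsTriangle a b c →
    (({(a, b), (a, c), (b, c)} : Finset (V × V)).filter
      (fun e => e.1 ∈ B ↔ e.2 ∈ B)).card = 1) ∧
  (∀ u v, G.Adj u v → (u ∈ B ↔ v ∈ B) → ∃ w, G.IsTriangle u v w) ∧
  (∀ a b c d, G.IsDiamond a b c d →
    (({(a, b), (a, c), (b, c), (b, d), (c, d)} : Finset (V × V)).filter
      (fun e => e.1 ∈ B ↔ e.2 ∈ B)).card = 1) ∧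
  (∀ u v, 2 ≤ G.mult u v → ¬ (u ∈ B ↔ v ∈ B))

end Bisection

end Multigraph

namespace Multigraph

variable {V : Type*} [DecidableEq V]

/-- Delete all edges between `x` and `y`. -/
def deleteEdge (G : Multigraph V) (x y : V) : Multigraph V where
  mult u v := if (u = x ∧ v = y) ∨ (u = y ∧ v = x) then 0 else G.mult u v
  symm := by
    intro u v
    have hsy := G.symm u v
    by_cases h : (u = x ∧ v = y) ∨ (u = y ∧ v = x)
    · have h' : (v = x ∧ u = y) ∨ (v = y ∧ u = x) := by tauto
      simp [h, h']
    · have h' : ¬ ((v = x ∧ u = y) ∨ (v = y ∧ u = x)) := by tauto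
      simp [h, h', hsy]
  loopless := by
    intro v
    by_cases h : (v = x ∧ v = y) ∨ (v = y ∧ v = x) <;> simp [h, G.loopless]

/-- The diamond reduction: delete the diamond vertices `a b c d` and add one new edge
between the outside neighbours `x` and `y`. -/
def diamondReduce (G : Multigraph V) (a b c d x y : V) :
    Multigraph {v : V // v ∉ ({a, b, c, d} : Finset V)} where
  mult u v := if u.1 ≠ v.1 ∧ ((u.1 = x ∧ v.1 = y) ∨ (u.1 = y ∧ v.1 = x))
    then G.mult u.1 v.1 + 1 else G.mult u.1 v.1
  symm := by
    intro u v
    have hsy := G.symm u.1 v.1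
    by_cases h : u.1 ≠ v.1 ∧ ((u.1 = x ∧ v.1 = y) ∨ (u.1 = y ∧ v.1 = x))
    · have h' : v.1 ≠ u.1 ∧ ((v.1 = x ∧ u.1 = y) ∨ (v.1 = y ∧ u.1 = x)) := by tauto
      simp [h, h', hsy]
    · have h' : ¬ (v.1 ≠ u.1 ∧ ((v.1 = x ∧ u.1 = y) ∨ (v.1 = y ∧ u.1 = x))) := by tauto
      simp [h, h', hsy]
  loopless := by
    intro v
    simp [G.loopless]

/-- A ring of two diamonds: two vertex-disjoint diamonds covering all of `V`, joined
cyclically by two edges between their degree-2 vertices. -/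
def IsRingOfTwoDiamonds (G : Multigraph V) : Prop :=
  ∃ a₁ b₁ c₁ d₁ a₂ b₂ c₂ d₂ : V,
    ([a₁, b₁, c₁, d₁, a₂, b₂, c₂, d₂] : List V).Nodup ∧
    (∀ v : V, v ∈ [a₁, b₁, c₁, d₁, a₂, b₂, c₂, d₂]) ∧
    G.IsDiamond a₁ b₁ c₁ d₁ ∧ G.IsDiamond a₂ b₂ c₂ d₂ ∧
    G.mult d₁ a₂ = 1 ∧ G.mult d₂ a₁ = 1

end Multigraph
/-!
Cubicity saturates the diamond: `b` and `c` have all their edges inside it, and `a`, `d` have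
exactly one edge leaving it, namely `ax` and `dy`. Hence the third neighbour `w` of `x`
(besides `a` and `y`) lies outside the diamond, and `a` is adjacent to neither `y` nor `w`.
Claw-freeness at `x` forces `yw` to be an edge, which is simple because `y` already has the
simple neighbours `d` and `x`. Finally the new edge of `G'` doubles `xy`.
-/

namespace Multigraph

variable {V : Type*} {G : Multigraph V}

lemma ne_of_mult_pos {u v : V} (h : 0 < G.mult u v) : u ≠ v := by
  rintro rfl
  simp [G.loopless] at h

lemma IsClawFree.mult_pos {x a y w : V} (hclaw : G.IsClawFree)
    (hxa : x ≠ a) (hxy : x ≠ y) (hxw : x ≠ w) (hay : a ≠ y) (haw : a ≠ w) (hyw : y ≠ w)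
    (hxa1 : G.mult x a = 1) (hxy1 : G.mult x y = 1) (hxw1 : G.mult x w = 1)
    (hay0 : G.mult a y = 0) (haw0 : G.mult a w = 0) : 0 < G.mult y w :=
  Nat.pos_of_ne_zero fun hyw0 =>
    hclaw ⟨x, a, y, w, hxa, hxy, hxw, hay, haw, hyw, hxa1, hxy1, hxw1, hay0, haw0, hyw0⟩

namespace IsDiamond

variable {a b c d : V}

lemma swap (hd : G.IsDiamond a b c d) : G.IsDiamond a c b d := by
  obtain ⟨hab, hac, had, hbc, hbd, hcd, mad, mab, mac, mbc, mbd, mcd⟩ := hd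
  exact ⟨hac, hab, had, hbc.symm, hcd, hbd, mad, mac, mab, G.symm b c ▸ mbc, mcd, mbd⟩

lemma reverse (hd : G.IsDiamond a b c d) : G.IsDiamond d b c a := by
  obtain ⟨hab, hac, had, hbc, hbd, hcd, mad, mab, mac, mbc, mbd, mcd⟩ := hd
  exact ⟨hbd.symm, hcd.symm, had.symm, hbc, hab.symm, hac.symm, G.symm a d ▸ mad,
    G.symm b d ▸ mbd, G.symm c d ▸ mcd, mbc, G.symm a b ▸ mab, G.symm a c ▸ mac⟩

end IsDiamond

section Cubic

variable [Fintype V]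

lemma sum_mult_le_degree (v : V) (s : Finset V) : ∑ u ∈ s, G.mult v u ≤ G.degree v :=
  Finset.sum_le_sum_of_subset (Finset.subset_univ s)

variable [DecidableEq V]

lemma mult_eq_zero_of_three_mult_eq_one {v p q r s : V} (hv : G.degree v = 3)
    (hpq : p ≠ q) (hpr : p ≠ r) (hqr : q ≠ r) (hsp : s ≠ p) (hsq : s ≠ q) (hsr : s ≠ r)
    (hp : G.mult v p = 1) (hq : G.mult v q = 1) (hr : G.mult v r = 1) : G.mult v s = 0 := by
  have hle := G.sum_mult_le_degree v {p, q, r, s}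
  rw [Finset.sum_insert (by simp [hpq, hpr, hsp.symm]), Finset.sum_insert (by simp [hqr, hsq.symm]),
    Finset.sum_pair hsr.symm] at hle
  omega

lemma mult_eq_one_of_two_mult_eq_one {v p q r : V} (hv : G.degree v = 3)
    (hpq : p ≠ q) (hpr : p ≠ r) (hqr : q ≠ r)
    (hp : G.mult v p = 1) (hq : G.mult v q = 1) (hr : 0 < G.mult v r) : G.mult v r = 1 := by
  have hle := G.sum_mult_le_degree v {p, q, r}
  rw [Finset.sum_insert (by simp [hpq, hpr]), Finset.sum_pair hqr] at hle
  omega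

lemma exists_third_mult_eq_one {v p q : V} (hv : G.degree v = 3) (hpq : p ≠ q)
    (hp : G.mult v p = 1) (hq : G.mult v q = 1) : ∃ r, r ≠ p ∧ r ≠ q ∧ G.mult v r = 1 := by
  have hsplit := Finset.sum_sdiff (f := G.mult v) (Finset.subset_univ {p, q})
  rw [Finset.sum_pair hpq, hp, hq] at hsplit
  have hrest : ∑ u ∈ Finset.univ \ {p, q}, G.mult v u = 1 := by
    change _ = G.degree v at hsplit
    omega
  obtain ⟨r, hr, hr0⟩ := Finset.exists_ne_zero_of_sum_ne_zero (hrest ▸ one_ne_zero)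
  have hrle := Finset.single_le_sum (fun u _ => Nat.zero_le (G.mult v u)) hr
  simp only [Finset.mem_sdiff, Finset.mem_univ, Finset.mem_insert, Finset.mem_singleton,
    true_and, not_or] at hr
  exact ⟨r, hr.1, hr.2, by omega⟩

namespace IsDiamond

variable {a b c d : V}

lemma mult_mid_eq_zero {v : V} (hd : G.IsDiamond a b c d) (hcubic : G.IsCubic)
    (hva : v ≠ a) (hvc : v ≠ c) (hvd : v ≠ d) : G.mult b v = 0 := by
  obtain ⟨hab, hac, had, hbc, hbd, hcd, mad, mab, mac, mbc, mbd, mcd⟩ := hd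
  exact mult_eq_zero_of_three_mult_eq_one (hcubic b) hac had hcd hva hvc hvd
    (G.symm a b ▸ mab) mbc mbd

lemma mult_end_eq_one {x : V} (hd : G.IsDiamond a b c d) (hcubic : G.IsCubic)
    (hx : G.Adj a x) (hxb : x ≠ b) (hxc : x ≠ c) : G.mult a x = 1 := by
  obtain ⟨-, -, -, hbc, -, -, -, mab, mac, -⟩ := hd
  exact mult_eq_one_of_two_mult_eq_one (hcubic a) hbc hxb.symm hxc.symm mab mac hx.2

lemma mult_end_eq_zero {x v : V} (hd : G.IsDiamond a b c d) (hcubic : G.IsCubic)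
    (hx : G.Adj a x) (hxb : x ≠ b) (hxc : x ≠ c) (hvb : v ≠ b) (hvc : v ≠ c) (hvx : v ≠ x) :
    G.mult a v = 0 := by
  have max := hd.mult_end_eq_one hcubic hx hxb hxc
  obtain ⟨-, -, -, hbc, -, -, -, mab, mac, -⟩ := hd
  exact mult_eq_zero_of_three_mult_eq_one (hcubic a) hbc hxb.symm hxc.symm hvb hvc hvx mab mac max

lemma eq_of_mult_pos {x y u v : V} (hd : G.IsDiamond a b c d) (hcubic : G.IsCubic)
    (hx : G.Adj a x) (hxo : x ∉ ({a, b, c, d} : Finset V))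
    (hy : G.Adj d y) (hyo : y ∉ ({a, b, c, d} : Finset V))
    (hu : u ∈ ({a, b, c, d} : Finset V)) (hv : v ∉ ({a, b, c, d} : Finset V))
    (huv : 0 < G.mult u v) : (u = a ∧ v = x) ∨ (u = d ∧ v = y) := by
  simp only [Finset.mem_insert, Finset.mem_singleton, not_or] at hu hv hxo hyo
  obtain ⟨hva, hvb, hvc, hvd⟩ := hv
  rcases hu with rfl | rfl | rfl | rfl
  · by_contra hvx
    have := hd.mult_end_eq_zero hcubic hx hxo.2.1 hxo.2.2.1 hvb hvc (by tauto)
    omega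
  · have := hd.mult_mid_eq_zero hcubic hva hvc hvd
    omega
  · have := hd.swap.mult_mid_eq_zero hcubic hva hvb hvd
    omega
  · by_contra hvy
    have := hd.reverse.mult_end_eq_zero hcubic hy hyo.2.1 hyo.2.2.1 hvb hvc (by tauto)
    omega

end IsDiamond

end Cubic

section DiamondReduce

variable [DecidableEq V] {a b c d x y : V}

lemma diamondReduce_mult_of_ne (u v : {v : V // v ∉ ({a, b, c, d} : Finset V)})
    (hvx : v.1 ≠ x) (hvy : v.1 ≠ y) :
    (G.diamondReduce a b c d x y).mult u v = G.mult u v :=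
  if_neg (by tauto)

lemma diamondReduce_mult_new_edge (hxo : x ∉ ({a, b, c, d} : Finset V))
    (hyo : y ∉ ({a, b, c, d} : Finset V)) (hxy : x ≠ y) :
    (G.diamondReduce a b c d x y).mult ⟨x, hxo⟩ ⟨y, hyo⟩ = G.mult x y + 1 :=
  if_pos ⟨hxy, Or.inl ⟨rfl, rfl⟩⟩

lemma isTrumpet_diamondReduce {w : V} (hxo : x ∉ ({a, b, c, d} : Finset V))
    (hyo : y ∉ ({a, b, c, d} : Finset V)) (hwo : w ∉ ({a, b, c, d} : Finset V))
    (hxy : x ≠ y) (hwx : w ≠ x) (hwy : w ≠ y)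
    (hxy1 : G.mult x y = 1) (hxw1 : G.mult x w = 1) (hyw1 : G.mult y w = 1) :
    (G.diamondReduce a b c d x y).IsTrumpet ⟨x, hxo⟩ ⟨y, hyo⟩ ⟨w, hwo⟩ := by
  refine ⟨by simpa using hxy, by simpa using hwx.symm, by simpa using hwy.symm, ?_, ?_, ?_⟩
  · rw [diamondReduce_mult_new_edge hxo hyo hxy, hxy1]
  · rw [diamondReduce_mult_of_ne _ _ hwx hwy, hxw1]
  · rw [diamondReduce_mult_of_ne _ _ hwx hwy, hyw1]

end DiamondReduce

end Multigraph

open Multigraph in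
theorem stmt12_general {V : Type*} [Fintype V] [DecidableEq V] (G : Multigraph V)
    (hclaw : G.IsClawFree) (hcubic : G.IsCubic)
    (a b c d x y : V) (hdiam : G.IsDiamond a b c d)
    (hx : G.Adj a x) (hxo : x ∉ ({a, b, c, d} : Finset V))
    (hy : G.Adj d y) (hyo : y ∉ ({a, b, c, d} : Finset V))
    (hxy : G.mult x y = 1) :
    ∃ w, ∃ hwo : w ∉ ({a, b, c, d} : Finset V), w ≠ x ∧ w ≠ y ∧
      G.mult x w = 1 ∧ G.mult y w = 1 ∧
      (G.diamondReduce a b c d x y).IsTrumpet ⟨x, hxo⟩ ⟨y, hyo⟩ ⟨w, hwo⟩ := by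
  obtain ⟨hxa, hxb, hxc, hxd⟩ : x ≠ a ∧ x ≠ b ∧ x ≠ c ∧ x ≠ d := by simpa using hxo
  obtain ⟨hya, hyb, hyc, -⟩ : y ≠ a ∧ y ≠ b ∧ y ≠ c ∧ y ≠ d := by simpa using hyo
  have hxy' : x ≠ y := ne_of_mult_pos (hxy ▸ one_pos)
  have hxa1 : G.mult x a = 1 := G.symm a x ▸ hdiam.mult_end_eq_one hcubic hx hxb hxc
  have hyd1 : G.mult y d = 1 := G.symm d y ▸ hdiam.reverse.mult_end_eq_one hcubic hy hyb hyc
  obtain ⟨w, hwa, hwy, hxw1⟩ := exists_third_mult_eq_one (hcubic x) hya.symm hxa1 hxy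
  have hwx : w ≠ x := (ne_of_mult_pos (hxw1 ▸ one_pos)).symm
  have hwo : w ∉ ({a, b, c, d} : Finset V) := fun hw => by
    rcases hdiam.eq_of_mult_pos hcubic hx hxo hy hyo hw hxo (G.symm w x ▸ hxw1 ▸ one_pos)
      with ⟨rfl, -⟩ | ⟨-, rfl⟩
    exacts [hwa rfl, hxy' rfl]
  obtain ⟨-, hwb, hwc, hwd⟩ : w ≠ a ∧ w ≠ b ∧ w ≠ c ∧ w ≠ d := by simpa using hwo
  have hay0 := hdiam.mult_end_eq_zero hcubic hx hxb hxc hyb hyc hxy'.symm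
  have haw0 := hdiam.mult_end_eq_zero hcubic hx hxb hxc hwb hwc hwx
  have hyw := hclaw.mult_pos hxa hxy' hwx.symm hya.symm hwa.symm hwy.symm hxa1 hxy hxw1 hay0 haw0
  have hyw1 := mult_eq_one_of_two_mult_eq_one (hcubic y) hxd.symm hwd.symm hwx.symm hyd1
    (G.symm x y ▸ hxy) hyw
  exact ⟨w, hwo, hwx, hwy, hxw1, hyw1,
    isTrumpet_diamondReduce hxo hyo hwo hxy' hwx hwy hxy hxw1 hyw1⟩

/-- If `xy` was a simple edge of `G`, the third neighbours of `x` and `y`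
coincide in a vertex `w`, and `w, x, y` form a trumpet of `G'` with parallel side `xy`. -/
theorem stmt12 {V : Type*} [Fintype V] [DecidableEq V] (G : Multigraph V)
    (hconn : G.Connected) (hclaw : G.IsClawFree) (hcubic : G.IsCubic)
    (hK4 : ¬ G.IsK4) (a b c d x y : V) (hdiam : G.IsDiamond a b c d)
    (hx : G.Adj a x) (hxo : x ∉ ({a, b, c, d} : Finset V))
    (hy : G.Adj d y) (hyo : y ∉ ({a, b, c, d} : Finset V))
    (hxy : G.mult x y = 1) :
    ∃ w, ∃ hwo : w ∉ ({a, b, c, d} : Finset V), w ≠ x ∧ w ≠ y ∧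
      G.mult x w = 1 ∧ G.mult y w = 1 ∧
      (G.diamondReduce a b c d x y).IsTrumpet ⟨x, hxo⟩ ⟨y, hyo⟩ ⟨w, hwo⟩ :=
  stmt12_general G hclaw hcubic a b c d x y hdiam hx hxo hy hyo hxy
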